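/- arXiv:0901.1705 — 4 statements merged into one kernel-verified Lean document; each statement's English description precedes it below -/
import Mathlib

section
/- Proposition 4 (sum-incremental property / rate transfer): For every d ∈ ℝ≥0^t, if r ∈ ℛ(d), then ℛ(d) contains the latent region ℒ(r) = { r̃ ∈ ℝ≥0^t : Σ_{k=1}^l r̃_k ≥ Σ_{k=1}^l r_k for every l ∈ [t] }; that is, rate can always be transferred from higher-index channels to lower-index channels. -/
open scoped BigOperators Classical

noncomputable section

/-- Probability that the random variable `A` takes the value `a` under the pmf `p`. -/
def pOf {Ω α : Type*} [Fintype Ω] (p : Ω → ℝ) (A : Ω → α) (a : α) : ℝ :=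
  ∑ ω, if A ω = a then p ω else 0

/-- Base-2 Shannon entropy of the random variable `A` under the pmf `p`. -/
def H2 {Ω α : Type*} [Fintype Ω] [Fintype α] (p : Ω → ℝ) (A : Ω → α) : ℝ :=
  -∑ a, pOf p A a * Real.logb 2 (pOf p A a)

/-- Conditional entropy `H(A | B)` (base 2). -/
def condH {Ω α β : Type*} [Fintype Ω] [Fintype α] [Fintype β]
    (p : Ω → ℝ) (A : Ω → α) (B : Ω → β) : ℝ :=
  H2 p (fun ω => (A ω, B ω)) - H2 p B

/-- Mutual information `I(A; B)` (base 2). -/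
def MI {Ω α β : Type*} [Fintype Ω] [Fintype α] [Fintype β]
    (p : Ω → ℝ) (A : Ω → α) (B : Ω → β) : ℝ :=
  H2 p A + H2 p B - H2 p (fun ω => (A ω, B ω))

/-- Conditional mutual information `I(A; B | C)` (base 2). -/
def CMI {Ω α β γ : Type*} [Fintype Ω] [Fintype α] [Fintype β] [Fintype γ]
    (p : Ω → ℝ) (A : Ω → α) (B : Ω → β) (C : Ω → γ) : ℝ :=
  H2 p (fun ω => (A ω, C ω)) + H2 p (fun ω => (B ω, C ω))
    - H2 p (fun ω => (A ω, B ω, C ω)) - H2 p C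

/-- `A` and `C` are conditionally independent given `B` under the pmf `p`,
    i.e. `A — B — C` is a Markov chain. -/
def CondIndep {Ω α β γ : Type*} [Fintype Ω] (p : Ω → ℝ)
    (A : Ω → α) (B : Ω → β) (C : Ω → γ) : Prop :=
  ∀ a b c,
    pOf p (fun ω => (A ω, B ω, C ω)) (a, b, c) * pOf p B b
      = pOf p (fun ω => (A ω, B ω)) (a, b) * pOf p (fun ω => (B ω, C ω)) (b, c)

/-- `p` is a probability mass function. -/
def IsPMF {Ω : Type*} [Fintype Ω] (p : Ω → ℝ) : Prop :=
  (∀ ω, 0 ≤ p ω) ∧ ∑ ω, p ω = 1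

/-- The iid extension of a pmf to sequences of length `n`. -/
def iidPMF {A : Type*} (q : A → ℝ) (n : ℕ) : (Fin n → A) → ℝ :=
  fun ω => ∏ i, q (ω i)

/-- A rate tuple `r` is `d`-admissible for the `t`-stage successive-refinement problem
with source pmf `q` and per-letter distortion measures `δ`: for every `ε > 0` there are
a blocklength `n`, finite message sets (of sizes `M l`), an encoder `f`, and decoders
`g l` (decoder `l` sees the messages of channels `1,…,l` and its side-information
sequence) such that every channel rate is at most `r l + ε` and every expected average
distortion is at most `d l + ε`. -/
def Admissible {t : ℕ} {X : Type*} [Fintype X] {Y : Fin t → Type*} [∀ l, Fintype (Y l)]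
    {Xh : Fin t → Type*}
    (q : X × (∀ l, Y l) → ℝ) (δ : ∀ l, X → Xh l → ℝ) (d r : Fin t → ℝ) : Prop :=
  (∀ l, 0 ≤ r l) ∧
  ∀ ε : ℝ, 0 < ε →
    ∃ (n : ℕ) (_ : 0 < n) (M : Fin t → ℕ) (_ : ∀ l, 1 ≤ M l)
      (f : (Fin n → X) → ∀ l, Fin (M l))
      (g : ∀ l : Fin t, (∀ k : Fin t, k ≤ l → Fin (M k)) → (Fin n → Y l) → Fin n → Xh l),
      (∀ l, Real.logb 2 (M l) / n ≤ r l + ε) ∧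
      (∀ l, (∑ ω : Fin n → X × (∀ l', Y l'),
          iidPMF q n ω *
            ((n : ℝ)⁻¹ * ∑ i, δ l (ω i).1
              (g l (fun k _ => f (fun i' => (ω i').1) k) (fun i' => (ω i').2 l) i)))
        ≤ d l + ε)

/-- The rate-distortion function for lossy source coding with side-information at `t`
decoders: the least single-channel rate `r` such that `(r, 0, …, 0)` is `d`-admissible. -/
def RdFun {t : ℕ} {X : Type*} [Fintype X] {Y : Fin t → Type*} [∀ l, Fintype (Y l)]
    {Xh : Fin t → Type*}
    (q : X × (∀ l, Y l) → ℝ) (δ : ∀ l, X → Xh l → ℝ) (ht : 0 < t)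
    (d : Fin t → ℝ) : ℝ :=
  sInf {r : ℝ | 0 ≤ r ∧
    Admissible q δ d (fun l => if l = (⟨0, ht⟩ : Fin t) then r else 0)}

/-- sum over a pi type of a product factorizes -/
lemma sum_pi_prod {ι Ω : Type*} [Fintype ι] [DecidableEq ι] [Fintype Ω] (F : ι → Ω → ℝ) :
    ∑ ω : ι → Ω, ∏ j, F j (ω j) = ∏ j, ∑ σ, F j σ := by
  have h := Finset.prod_univ_sum (fun _ : ι => (Finset.univ : Finset Ω)) (fun i σ => F i σ)
  rw [Fintype.piFinset_univ] at h
  exact h.symm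

lemma iid_sum_one {A : Type*} [Fintype A] {q : A → ℝ} (hq : ∑ a, q a = 1) (k : ℕ) :
    ∑ ω : Fin k → A, iidPMF q k ω = 1 := by
  have h := sum_pi_prod (fun _ : Fin k => q)
  simpa [iidPMF, hq] using h

lemma marginal {ι Ω : Type*} [Fintype ι] [DecidableEq ι] [Fintype Ω] (P : Ω → ℝ)
    (hP : ∑ σ, P σ = 1) (j₀ : ι) (G : Ω → ℝ) :
    ∑ ω : ι → Ω, (∏ j, P (ω j)) * G (ω j₀) = ∑ σ, P σ * G σ := by
  have h1 : ∀ ω : ι → Ω, (∏ j, P (ω j)) * G (ω j₀)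
      = ∏ j, (P (ω j) * (if j = j₀ then G (ω j) else 1)) := by
    intro ω
    rw [Finset.prod_mul_distrib, Finset.prod_ite_eq']
    simp
  calc ∑ ω : ι → Ω, (∏ j, P (ω j)) * G (ω j₀)
      = ∑ ω : ι → Ω, ∏ j, (P (ω j) * (if j = j₀ then G (ω j) else 1)) :=
        Finset.sum_congr rfl (fun ω _ => h1 ω)
    _ = ∏ j, ∑ σ, (P σ * (if j = j₀ then G σ else 1)) :=
        sum_pi_prod (fun j σ => P σ * (if j = j₀ then G σ else 1))
    _ = ∑ σ, P σ * G σ := by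
        have h2 : ∀ j : ι, (∑ σ, (P σ * (if j = j₀ then G σ else 1)))
            = if j = j₀ then ∑ σ, P σ * G σ else 1 := by
          intro j; by_cases h : j = j₀ <;> simp [h, hP]
        rw [Finset.prod_congr rfl (fun j _ => h2 j), Finset.prod_ite_eq']
        simp

def pSumLt {t : ℕ} (s : Fin t → ℕ) (k : Fin t) : ℕ :=
  ∑ k' ∈ Finset.univ.filter (fun k' => k' < k), s k'

def pSumLe {t : ℕ} (s : Fin t → ℕ) (k : Fin t) : ℕ :=
  ∑ k' ∈ Finset.univ.filter (fun k' => k' ≤ k), s k'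

lemma pSumLe_eq {t : ℕ} (s : Fin t → ℕ) (k : Fin t) : pSumLe s k = pSumLt s k + s k := by
  unfold pSumLe pSumLt
  rw [show Finset.univ.filter (fun k' => k' ≤ k)
      = insert k (Finset.univ.filter (fun k' : Fin t => k' < k)) by
    ext k'; simp [le_iff_lt_or_eq, or_comm]]
  rw [Finset.sum_insert (by simp)]
  omega

lemma pSumLe_le_pSumLt {t : ℕ} (s : Fin t → ℕ) {k k' : Fin t} (h : k < k') :
    pSumLe s k ≤ pSumLt s k' := by
  apply Finset.sum_le_sum_of_subset
  intro x hx
  simp only [Finset.mem_filter, Finset.mem_univ, true_and] at *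
  exact lt_of_le_of_lt hx h

lemma pSumLe_mono {t : ℕ} (s : Fin t → ℕ) {k l : Fin t} (h : k ≤ l) :
    pSumLe s k ≤ pSumLe s l := by
  apply Finset.sum_le_sum_of_subset
  intro x hx
  simp only [Finset.mem_filter, Finset.mem_univ, true_and] at *
  exact le_trans hx h

lemma rank_lt {t : ℕ} (s : Fin t → ℕ) {k : Fin t} {i : ℕ} (hi : i < s k) :
    pSumLt s k + i < pSumLe s k := by
  rw [pSumLe_eq]; omega

lemma rank_inj {t : ℕ} (s : Fin t → ℕ) {k k' : Fin t} {i i' : ℕ}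
    (hi : i < s k) (hi' : i' < s k') (h : pSumLt s k + i = pSumLt s k' + i') :
    k = k' ∧ i = i' := by
  rcases lt_trichotomy k k' with hlt | heq | hgt
  · exfalso
    have h1 : pSumLt s k + i < pSumLe s k := rank_lt s hi
    have h2 : pSumLe s k ≤ pSumLt s k' := pSumLe_le_pSumLt s hlt
    omega
  · subst heq; omega
  · exfalso
    have h1 : pSumLt s k' + i' < pSumLe s k' := rank_lt s hi'
    have h2 : pSumLe s k' ≤ pSumLt s k := pSumLe_le_pSumLt s hgt
    omega

lemma exists_rank {t : ℕ} (c : Fin t → ℕ) (l : Fin t) {p : ℕ} (hp : p < pSumLe c l) :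
    ∃ k, k ≤ l ∧ ∃ i : ℕ, i < c k ∧ pSumLt c k + i = p := by
  classical
  set S := Finset.univ.filter (fun k : Fin t => p < pSumLe c k) with hS
  have hlS : l ∈ S := by simp [hS, hp]
  have hSne : S.Nonempty := ⟨l, hlS⟩
  set k := S.min' hSne with hk
  have hkS : k ∈ S := S.min'_mem hSne
  have hkp : p < pSumLe c k := by simpa [hS] using hkS
  have hkl : k ≤ l := S.min'_le l hlS
  have hlow : pSumLt c k ≤ p := by
    by_contra hcon
    push_neg at hcon
    have hk0 : k.val ≠ 0 := by
      intro h0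
      have hempty : Finset.univ.filter (fun k' : Fin t => k' < k) = ∅ := by
        apply Finset.filter_false_of_mem
        intro x _
        simp only [Fin.lt_def]
        omega
      rw [pSumLt, hempty] at hcon
      simp at hcon
    obtain ⟨j, hj⟩ : ∃ j, k.val = j + 1 := ⟨k.val - 1, by omega⟩
    have hjt : j < t := by omega
    set km : Fin t := ⟨j, hjt⟩ with hkm
    have heq : pSumLe c km = pSumLt c k := by
      unfold pSumLe pSumLt
      apply Finset.sum_congr _ (fun _ _ => rfl)
      ext x
      simp only [Finset.mem_filter, Finset.mem_univ, true_and]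
      constructor
      · intro hx
        simp only [Fin.le_def, Fin.val_mk] at hx
        simp only [Fin.lt_def]
        change (x:ℕ) ≤ j at hx
        omega
      · intro hx
        simp only [Fin.lt_def] at hx
        simp only [Fin.le_def, Fin.val_mk]
        show (x:ℕ) ≤ j
        omega
    have hkmS : km ∈ S := by
      simp only [hS, Finset.mem_filter, Finset.mem_univ, true_and]
      rw [heq]; exact hcon
    have hmin := Fin.le_def.mp (S.min'_le km hkmS)
    change (k:ℕ) ≤ j at hmin
    omega
  refine ⟨k, hkl, p - pSumLt c k, ?_, by omega⟩
  have := pSumLe_eq c k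
  omega


lemma exists_inj {α β : Type*} [Fintype α] [Fintype β] (h : Fintype.card α ≤ Fintype.card β) :
    ∃ ι : α → β, Function.Injective ι :=
  ⟨(Fintype.equivFin β).symm ∘ Fin.castLE h ∘ Fintype.equivFin α,
   ((Fintype.equivFin β).symm.injective.comp (Fin.castLE_injective h)).comp
     (Fintype.equivFin α).injective⟩

def streamOf {t : ℕ} (s : Fin t → ℕ) (bits : ∀ k : Fin t, Fin (s k) → Bool) : ℕ → Bool :=
  fun p => decide (∃ (k : Fin t) (i : Fin (s k)), pSumLt s k + i.val = p ∧ bits k i = true)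

lemma streamOf_eval {t : ℕ} (s : Fin t → ℕ) (bits : ∀ k : Fin t, Fin (s k) → Bool)
    (k : Fin t) (i : Fin (s k)) :
    streamOf s bits (pSumLt s k + i.val) = bits k i := by
  unfold streamOf
  cases hb : bits k i with
  | true =>
    rw [decide_eq_true_eq]
    exact ⟨k, i, rfl, hb⟩
  | false =>
    rw [decide_eq_false_iff_not]
    rintro ⟨k', i', he, hb'⟩
    obtain ⟨rfl, hii⟩ := rank_inj s i'.isLt i.isLt he
    have : i' = i := Fin.ext hii
    rw [this, hb] at hb'
    exact Bool.false_ne_true hb'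

def streamRec {t : ℕ} (c : Fin t → ℕ) (l : Fin t)
    (bits : ∀ k : Fin t, k ≤ l → Fin (c k) → Bool) : ℕ → Bool :=
  fun p => decide (∃ (k : Fin t) (hk : k ≤ l) (i : Fin (c k)),
    pSumLt c k + i.val = p ∧ bits k hk i = true)

lemma streamRec_eval {t : ℕ} (c : Fin t → ℕ) (l : Fin t) (B : ℕ → Bool) (p : ℕ)
    (hp : p < pSumLe c l) :
    streamRec c l (fun k _ i => B (pSumLt c k + i.val)) p = B p := by
  unfold streamRec
  cases hB : B p with
  | true =>
    rw [decide_eq_true_eq]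
    obtain ⟨k, hkl, i, hik, hri⟩ := exists_rank c l hp
    refine ⟨k, hkl, ⟨i, hik⟩, hri, ?_⟩
    show B (pSumLt c k + i) = true
    rw [hri, hB]
  | false =>
    rw [decide_eq_false_iff_not]
    rintro ⟨k, hk, i, he, hb⟩
    have hb' : B (pSumLt c k + i.val) = true := hb
    rw [he, hB] at hb'
    exact Bool.false_ne_true hb'

/-- **Sum-incremental property / rate transfer (Proposition 4).**  If `r ∈ ℛ(d)`, then
every `r̃ ∈ ℝ≥0^t` whose partial sums dominate those of `r` (i.e.
`Σ_{k≤l} r̃_k ≥ Σ_{k≤l} r_k` for every `l`) is also `d`-admissible. -/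
theorem sum_incremental
    {t : ℕ} {X : Type*} [Fintype X] {Y : Fin t → Type*} [∀ l, Fintype (Y l)]
    {Xh : Fin t → Type*} [∀ l, Fintype (Xh l)]
    (q : X × (∀ l, Y l) → ℝ) (hq : IsPMF q)
    (δ : ∀ l, X → Xh l → ℝ) (hδ : ∀ l x xh, 0 ≤ δ l x xh)
    (d : Fin t → ℝ) (hd : ∀ l, 0 ≤ d l)
    (r : Fin t → ℝ) (hr : Admissible q δ d r)
    (r' : Fin t → ℝ) (hr'0 : ∀ l, 0 ≤ r' l)
    (hsum : ∀ l : Fin t,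
      ∑ k ∈ Finset.univ.filter (fun k : Fin t => k ≤ l), r k
        ≤ ∑ k ∈ Finset.univ.filter (fun k : Fin t => k ≤ l), r' k) :
    Admissible q δ d r' := by
  classical
  obtain ⟨hr0, hcode⟩ := hr
  refine ⟨hr'0, ?_⟩
  intro ε hε
  obtain ⟨n, hn, M, hM, f, g, hrate, hdist⟩ := hcode (ε/4) (by positivity)
  set m : ℕ := max 1 ⌈4/ε⌉₊ with hm
  have hm1 : 1 ≤ m := le_max_left _ _
  set N : ℕ := m * n with hNdef
  have hNpos : 0 < N := Nat.mul_pos (by omega) hn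
  have hNR : (0:ℝ) < N := by exact_mod_cast hNpos
  have hnR : (0:ℝ) < n := by exact_mod_cast hn
  have hmR : (0:ℝ) < m := by exact_mod_cast (by omega : 0 < m)
  have hNge : 4/ε ≤ (N:ℝ) := by
    have h1 : (⌈4/ε⌉₊ : ℝ) ≤ (m:ℝ) := by exact_mod_cast le_max_right 1 ⌈4/ε⌉₊
    have h2 : (m:ℝ) ≤ (N:ℝ) := by
      have h3 : m ≤ N := Nat.le_mul_of_pos_right m hn
      exact_mod_cast h3
    linarith [Nat.le_ceil (4/ε)]
  have hεN : 4 ≤ (N:ℝ) * ε := by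
    rw [div_le_iff₀ hε] at hNge; linarith
  set s : Fin t → ℕ := fun k => Nat.clog 2 (M k ^ m) with hs
  set c : Fin t → ℕ := fun k => ⌈(N:ℝ) * (r' k + ε/2)⌉₊ with hc
  have hrnn : ∀ k, (0:ℝ) ≤ (N:ℝ) * (r' k + ε/2) := fun k =>
    mul_nonneg hNR.le (by linarith [hr'0 k])
  have hc_ge : ∀ k, (N:ℝ) * (r' k + ε/2) ≤ (c k : ℝ) := fun k => Nat.le_ceil _
  have hc_le : ∀ k, (c k : ℝ) ≤ (N:ℝ) * (r' k + ε/2) + 1 := fun k =>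
    le_of_lt (Nat.ceil_lt_add_one (hrnn k))
  have hlogM : ∀ k, Real.logb 2 (M k) ≤ (n:ℝ) * (r k + ε/4) := by
    intro k
    have h := hrate k
    rw [div_le_iff₀ hnR] at h
    linarith
  have hpow : ∀ k, M k ^ m ≤ 2 ^ s k := fun k => Nat.le_pow_clog (by norm_num) _
  have hs_le : ∀ k, (s k : ℝ) ≤ (N:ℝ) * (r k + ε/4) + 1 := by
    intro k
    have hNr : (0:ℝ) ≤ (N:ℝ) * (r k + ε/4) := mul_nonneg hNR.le (by linarith [hr0 k])
    by_cases h1 : M k ^ m ≤ 1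
    · have hMm : M k ^ m = 1 := le_antisymm h1 (Nat.one_le_pow _ _ (hM k))
      have h0 : s k = 0 := by rw [hs]; simp only [hMm]; exact Nat.clog_one_right 2
      rw [h0]; push_cast; linarith
    · push_neg at h1
      have hclogpos : 0 < s k := Nat.clog_pos (by norm_num) h1
      have hlt : 2 ^ (s k - 1) < M k ^ m := by
        have h2 := Nat.pow_pred_clog_lt_self (b := 2) (by norm_num) h1
        simpa [hs, Nat.pred_eq_sub_one] using h2
      have hltR : (2:ℝ) ^ (s k - 1) < ((M k : ℝ)) ^ m := by exact_mod_cast hlt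
      have hlog2 : ((s k - 1 : ℕ) : ℝ) < (m:ℝ) * Real.logb 2 (M k) := by
        have h2 : Real.logb 2 ((2:ℝ) ^ (s k - 1)) < Real.logb 2 ((M k : ℝ) ^ m) :=
          Real.logb_lt_logb (by norm_num) (by positivity) hltR
        rwa [Real.logb_pow, Real.logb_pow, Real.logb_self_eq_one (by norm_num), mul_one] at h2
      have hmul : (m:ℝ) * Real.logb 2 (M k) ≤ (m:ℝ) * ((n:ℝ) * (r k + ε/4)) :=
        mul_le_mul_of_nonneg_left (hlogM k) hmR.le
      have hNme : (m:ℝ) * ((n:ℝ) * (r k + ε/4)) = (N:ℝ) * (r k + ε/4) := by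
        rw [hNdef]; push_cast; ring
      have hsk : (s k : ℝ) = ((s k - 1 : ℕ) : ℝ) + 1 := by
        have h3 : (s k - 1) + 1 = s k := Nat.succ_pred_eq_of_pos hclogpos
        exact_mod_cast h3.symm
      linarith
  have hSC : ∀ l : Fin t, pSumLe s l ≤ pSumLe c l := by
    intro l
    rw [← Nat.cast_le (α := ℝ)]
    unfold pSumLe
    push_cast
    calc ∑ k ∈ Finset.univ.filter (fun k : Fin t => k ≤ l), (s k : ℝ)
        ≤ ∑ k ∈ Finset.univ.filter (fun k : Fin t => k ≤ l), ((N:ℝ) * (r k + ε/4) + 1) :=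
          Finset.sum_le_sum (fun k _ => hs_le k)
      _ = ∑ k ∈ Finset.univ.filter (fun k : Fin t => k ≤ l), ((N:ℝ) * r k)
          + ((Finset.univ.filter (fun k : Fin t => k ≤ l)).card : ℝ) * ((N:ℝ)*(ε/4) + 1) := by
          rw [Finset.sum_congr rfl
            (fun k _ => (by ring : (N:ℝ) * (r k + ε/4) + 1 = (N:ℝ) * r k + ((N:ℝ)*(ε/4)+1))),
            Finset.sum_add_distrib, Finset.sum_const, nsmul_eq_mul]
      _ ≤ ∑ k ∈ Finset.univ.filter (fun k : Fin t => k ≤ l), ((N:ℝ) * r' k)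
          + ((Finset.univ.filter (fun k : Fin t => k ≤ l)).card : ℝ) * ((N:ℝ)*(ε/4) + 1) := by
          have h2 : ∑ k ∈ Finset.univ.filter (fun k : Fin t => k ≤ l), ((N:ℝ) * r k)
              ≤ ∑ k ∈ Finset.univ.filter (fun k : Fin t => k ≤ l), ((N:ℝ) * r' k) := by
            rw [← Finset.mul_sum, ← Finset.mul_sum]
            exact mul_le_mul_of_nonneg_left (hsum l) hNR.le
          linarith
      _ ≤ ∑ k ∈ Finset.univ.filter (fun k : Fin t => k ≤ l), ((N:ℝ) * r' k)
          + ((Finset.univ.filter (fun k : Fin t => k ≤ l)).card : ℝ) * ((N:ℝ)*(ε/2)) := by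
          have hcard : (0:ℝ) ≤ ((Finset.univ.filter (fun k : Fin t => k ≤ l)).card : ℝ) := by
            positivity
          have h3 : (N:ℝ)*(ε/4) + 1 ≤ (N:ℝ)*(ε/2) := by linarith
          nlinarith
      _ = ∑ k ∈ Finset.univ.filter (fun k : Fin t => k ≤ l), ((N:ℝ) * (r' k + ε/2)) := by
          rw [Finset.sum_congr rfl
            (fun k _ => (by ring : (N:ℝ) * (r' k + ε/2) = (N:ℝ) * r' k + (N:ℝ)*(ε/2))),
            Finset.sum_add_distrib, Finset.sum_const, nsmul_eq_mul]
      _ ≤ ∑ k ∈ Finset.univ.filter (fun k : Fin t => k ≤ l), (c k : ℝ) :=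
          Finset.sum_le_sum (fun k _ => hc_ge k)
  -- construction of the new code
  have hcard2 : ∀ k : Fin t, Fintype.card (Fin m → Fin (M k)) ≤ Fintype.card (Fin (s k) → Bool) := by
    intro k
    rw [Fintype.card_fun, Fintype.card_fun]
    simpa using hpow k
  choose ι hι using fun k => exists_inj (hcard2 k)
  have hPine : ∀ k : Fin t, Nonempty (Fin m → Fin (M k)) := fun k => ⟨fun _ => ⟨0, hM k⟩⟩
  set E : ∀ k : Fin t, Fin (2 ^ c k) ≃ (Fin (c k) → Bool) := fun k =>
    Fintype.equivOfCardEq (by simp [Fintype.card_fun]) with hE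
  set e : Fin m × Fin n ≃ Fin N := finProdFinEquiv with he
  set pay : (Fin N → X) → ∀ k : Fin t, Fin m → Fin (M k) :=
    fun x k j => f (fun i => x (e (j, i))) k with hpay
  set B : (Fin N → X) → ℕ → Bool := fun x => streamOf s (fun k => ι k (pay x k)) with hB
  set fnew : (Fin N → X) → ∀ k : Fin t, Fin (2 ^ c k) :=
    fun x k => (E k).symm (fun i => B x (pSumLt c k + i.val)) with hfnew
  set dec : ∀ l : Fin t, (∀ k : Fin t, k ≤ l → Fin (2 ^ c k)) → ∀ k : Fin t, Fin m → Fin (M k) :=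
    fun l msgs k => @Function.invFun _ _ (hPine k) (ι k)
      (fun i : Fin (s k) =>
        streamRec c l (fun k' hk' i' => E k' (msgs k' hk') i') (pSumLt s k + i.val)) with hdec
  set gnew : ∀ l : Fin t, (∀ k : Fin t, k ≤ l → Fin (2 ^ c k)) → (Fin N → Y l) → Fin N → Xh l :=
    fun l msgs y i =>
      g l (fun k _ => dec l msgs k (e.symm i).1)
        (fun i' => y (e ((e.symm i).1, i'))) (e.symm i).2 with hgnew
  have hkey : ∀ (x : Fin N → X) (l k : Fin t), k ≤ l →
      dec l (fun k' _ => fnew x k') k = pay x k := by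
    intro x l k hkl
    have h1 : (fun (k' : Fin t) (hk' : k' ≤ l) (i' : Fin (c k')) => E k' (fnew x k') i')
        = (fun k' _ i' => B x (pSumLt c k' + i'.val)) := by
      funext k' hk' i'
      simp only [hfnew, Equiv.apply_symm_apply]
    have hstream : (fun i : Fin (s k) =>
        streamRec c l (fun k' hk' i' => E k' (fnew x k') i') (pSumLt s k + i.val))
        = ι k (pay x k) := by
      funext i
      have hb : pSumLt s k + i.val < pSumLe c l :=
        lt_of_lt_of_le (rank_lt s i.isLt) (le_trans (pSumLe_mono s hkl) (hSC l))
      calc streamRec c l (fun k' hk' i' => E k' (fnew x k') i') (pSumLt s k + i.val)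
          = streamRec c l (fun k' _ i' => B x (pSumLt c k' + i'.val)) (pSumLt s k + i.val) := by
            rw [h1]
        _ = B x (pSumLt s k + i.val) := streamRec_eval c l (B x) _ hb
        _ = ι k (pay x k) i := by rw [hB]; exact streamOf_eval s _ k i
    simp only [hdec]
    rw [hstream]
    exact @Function.leftInverse_invFun _ _ (hPine k) _ (hι k) (pay x k)
  refine ⟨N, hNpos, fun k => 2 ^ c k, fun k => Nat.one_le_two_pow, fnew, gnew, ?_, ?_⟩
  · -- rates
    intro k
    have h2c : (((2:ℕ) ^ c k : ℕ) : ℝ) = (2:ℝ) ^ (c k) := by push_cast; ring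
    show Real.logb 2 ((2 ^ c k : ℕ) : ℝ) / (N:ℝ) ≤ r' k + ε
    rw [h2c, Real.logb_pow, Real.logb_self_eq_one (by norm_num), mul_one, div_le_iff₀ hNR]
    have h := hc_le k
    have hexp : (r' k + ε) * (N:ℝ) = (N:ℝ)*(r' k + ε/2) + (N:ℝ)*(ε/2) := by ring
    linarith
  · -- distortions
    intro l
    have hrec : ∀ (ω : Fin N → X × (∀ l', Y l')) (j : Fin m) (i' : Fin n),
        gnew l (fun k _ => fnew (fun a => (ω a).1) k) (fun a => (ω a).2 l) (e (j, i'))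
          = g l (fun k _ => f (fun a => (ω (e (j, a))).1) k)
              (fun a => (ω (e (j, a))).2 l) i' := by
      intro ω j i'
      have harg : (fun (k : Fin t) (_ : k ≤ l) =>
            dec l (fun k' _ => fnew (fun a => (ω a).1) k') k j)
          = (fun k _ => f (fun a => (ω (e (j, a))).1) k) := by
        funext k hk
        rw [hkey (fun a => (ω a).1) l k hk]
      simp only [hgnew, Equiv.symm_apply_apply]
      rw [← harg]
    set EQ : (Fin m → Fin n → X × (∀ l', Y l')) ≃ (Fin N → X × (∀ l', Y l')) :=
      (Equiv.curry (Fin m) (Fin n) (X × (∀ l', Y l'))).symm.trans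
        (Equiv.arrowCongr e (Equiv.refl _)) with hEQ
    have hEQgen : ∀ (τ : Fin m → Fin n → X × (∀ l', Y l')) (i : Fin N),
        EQ τ i = τ (e.symm i).1 (e.symm i).2 := fun τ i => rfl
    have hEQap : ∀ (τ : Fin m → Fin n → X × (∀ l', Y l')) (j : Fin m) (i' : Fin n),
        EQ τ (e (j, i')) = τ j i' := by
      intro τ j i'
      rw [hEQgen, Equiv.symm_apply_apply]
    have hiid : ∀ τ : Fin m → Fin n → X × (∀ l', Y l'),
        iidPMF q N (EQ τ) = ∏ j, iidPMF q n (τ j) := by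
      intro τ
      show ∏ i, q (EQ τ i) = _
      rw [← Equiv.prod_comp e (fun i => q (EQ τ i)), Fintype.prod_prod_type]
      apply Finset.prod_congr rfl
      intro j _
      show ∏ i', q (EQ τ (e (j, i'))) = ∏ i', q (τ j i')
      exact Finset.prod_congr rfl (fun i' _ => by rw [hEQap])
    have hinner : ∀ ω : Fin N → X × (∀ l', Y l'),
        ∑ i, δ l (ω i).1
            (gnew l (fun k _ => fnew (fun i' => (ω i').1) k) (fun i' => (ω i').2 l) i)
        = ∑ j : Fin m, ∑ i' : Fin n, δ l ((ω (e (j, i'))).1)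
            (g l (fun k _ => f (fun a => (ω (e (j, a))).1) k)
              (fun a => (ω (e (j, a))).2 l) i') := by
      intro ω
      rw [← Equiv.sum_comp e (fun i => δ l (ω i).1
        (gnew l (fun k _ => fnew (fun i' => (ω i').1) k) (fun i' => (ω i').2 l) i)),
        Fintype.sum_prod_type]
      apply Finset.sum_congr rfl
      intro j _
      apply Finset.sum_congr rfl
      intro i' _
      rw [hrec ω j i']
    have hP1 : ∑ σ : Fin n → X × (∀ l', Y l'), iidPMF q n σ = 1 := iid_sum_one hq.2 n
    have hNm : ((N:ℝ))⁻¹ * (m:ℝ) = (n:ℝ)⁻¹ := by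
      have hNe : (N:ℝ) = (m:ℝ) * n := by rw [hNdef]; push_cast; ring
      rw [hNe, mul_inv, mul_comm ((m:ℝ)⁻¹), mul_assoc, inv_mul_cancel₀ (ne_of_gt hmR), mul_one]
    calc ∑ ω : Fin N → X × (∀ l', Y l'),
          iidPMF q N ω * ((N:ℝ)⁻¹ * ∑ i, δ l (ω i).1
            (gnew l (fun k _ => fnew (fun i' => (ω i').1) k) (fun i' => (ω i').2 l) i))
        = ∑ ω : Fin N → X × (∀ l', Y l'),
          iidPMF q N ω * ((N:ℝ)⁻¹ * ∑ j : Fin m, ∑ i' : Fin n, δ l ((ω (e (j, i'))).1)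
            (g l (fun k _ => f (fun a => (ω (e (j, a))).1) k)
              (fun a => (ω (e (j, a))).2 l) i')) :=
          Finset.sum_congr rfl (fun ω _ => by rw [hinner ω])
      _ = ∑ τ : Fin m → Fin n → X × (∀ l', Y l'),
          iidPMF q N (EQ τ) * ((N:ℝ)⁻¹ * ∑ j : Fin m, ∑ i' : Fin n, δ l (((EQ τ) (e (j, i'))).1)
            (g l (fun k _ => f (fun a => ((EQ τ) (e (j, a))).1) k)
              (fun a => ((EQ τ) (e (j, a))).2 l) i')) :=
          (Equiv.sum_comp EQ _).symm
      _ = ∑ τ : Fin m → Fin n → X × (∀ l', Y l'),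
          (∏ j', iidPMF q n (τ j')) * ((N:ℝ)⁻¹ * ∑ j : Fin m, ∑ i' : Fin n, δ l ((τ j i').1)
            (g l (fun k _ => f (fun a => (τ j a).1) k) (fun a => (τ j a).2 l) i')) := by
          apply Finset.sum_congr rfl
          intro τ _
          rw [hiid τ]
          congr 1
          congr 1
          apply Finset.sum_congr rfl
          intro j _
          apply Finset.sum_congr rfl
          intro i' _
          simp only [hEQap]
      _ = (N:ℝ)⁻¹ * ∑ j : Fin m, ∑ τ : Fin m → Fin n → X × (∀ l', Y l'),
          (∏ j', iidPMF q n (τ j')) * (∑ i' : Fin n, δ l ((τ j i').1)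
            (g l (fun k _ => f (fun a => (τ j a).1) k) (fun a => (τ j a).2 l) i')) := by
          calc ∑ τ : Fin m → Fin n → X × (∀ l', Y l'),
              (∏ j', iidPMF q n (τ j')) * ((N:ℝ)⁻¹ * ∑ j : Fin m, ∑ i' : Fin n, δ l ((τ j i').1)
                (g l (fun k _ => f (fun a => (τ j a).1) k) (fun a => (τ j a).2 l) i'))
              = ∑ τ : Fin m → Fin n → X × (∀ l', Y l'), ∑ j : Fin m,
                (N:ℝ)⁻¹ * ((∏ j', iidPMF q n (τ j')) * ∑ i' : Fin n, δ l ((τ j i').1)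
                  (g l (fun k _ => f (fun a => (τ j a).1) k) (fun a => (τ j a).2 l) i')) := by
                apply Finset.sum_congr rfl
                intro τ _
                rw [Finset.mul_sum, Finset.mul_sum]
                exact Finset.sum_congr rfl (fun j _ => by ring)
            _ = ∑ j : Fin m, ∑ τ : Fin m → Fin n → X × (∀ l', Y l'),
                (N:ℝ)⁻¹ * ((∏ j', iidPMF q n (τ j')) * ∑ i' : Fin n, δ l ((τ j i').1)
                  (g l (fun k _ => f (fun a => (τ j a).1) k) (fun a => (τ j a).2 l) i')) :=
                Finset.sum_comm
            _ = (N:ℝ)⁻¹ * ∑ j : Fin m, ∑ τ : Fin m → Fin n → X × (∀ l', Y l'),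
                (∏ j', iidPMF q n (τ j')) * (∑ i' : Fin n, δ l ((τ j i').1)
                  (g l (fun k _ => f (fun a => (τ j a).1) k) (fun a => (τ j a).2 l) i')) := by
                rw [Finset.mul_sum]
                exact Finset.sum_congr rfl (fun j _ => by rw [Finset.mul_sum])
      _ = (N:ℝ)⁻¹ * ∑ j : Fin m, ∑ σ : Fin n → X × (∀ l', Y l'),
          iidPMF q n σ * (∑ i' : Fin n, δ l ((σ i').1)
            (g l (fun k _ => f (fun a => (σ a).1) k) (fun a => (σ a).2 l) i')) := by
          congr 1
          apply Finset.sum_congr rfl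
          intro j _
          exact marginal (iidPMF q n) hP1 j (fun σ => ∑ i' : Fin n, δ l ((σ i').1)
            (g l (fun k _ => f (fun a => (σ a).1) k) (fun a => (σ a).2 l) i'))
      _ = (N:ℝ)⁻¹ * ((m:ℝ) * ∑ σ : Fin n → X × (∀ l', Y l'),
          iidPMF q n σ * (∑ i' : Fin n, δ l ((σ i').1)
            (g l (fun k _ => f (fun a => (σ a).1) k) (fun a => (σ a).2 l) i'))) := by
          rw [Finset.sum_const, Finset.card_univ, Fintype.card_fin, nsmul_eq_mul]
      _ = ∑ σ : Fin n → X × (∀ l', Y l'),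
          iidPMF q n σ * ((n:ℝ)⁻¹ * ∑ i' : Fin n, δ l ((σ i').1)
            (g l (fun k _ => f (fun a => (σ a).1) k) (fun a => (σ a).2 l) i')) := by
          rw [← mul_assoc, hNm, Finset.mul_sum]
          exact Finset.sum_congr rfl (fun σ _ => by ring)
      _ ≤ d l + ε/4 := hdist l
      _ ≤ d l + ε := by linarith


end
end

section
/- Proposition 2 (the admissible rate region depends only on pairwise marginals): Let q' and q'' be pmfs on 𝒳 × 𝒴_1 × ⋯ × 𝒴_t, and let ℛ(d)[q'] and ℛ(d)[q''] denote the corresponding d-admissible rate regions with the same distortion measures. If q'(x, y_l) = q''(x, y_l) for all (x, y_l) ∈ 𝒳 × 𝒴_l and every l ∈ [t], then ℛ(d)[q'] = ℛ(d)[q'']. -/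
open scoped BigOperators Classical

noncomputable section

/-- Pushing an iid sum through a coordinatewise projection. -/
lemma sum_iid_proj {A B : Type*} [Fintype A] [Fintype B] (q : A → ℝ) (π : A → B) (n : ℕ)
    (h : (Fin n → B) → ℝ) :
    ∑ ω : Fin n → A, iidPMF q n ω * h (fun i => π (ω i))
      = ∑ σ : Fin n → B, iidPMF (pOf q π) n σ * h σ := by
  have hfact : ∀ σ : Fin n → B, iidPMF (pOf q π) n σ
      = ∑ ω : Fin n → A, ∏ i, (if π (ω i) = σ i then q (ω i) else 0) := by
    intro σ
    unfold iidPMF pOf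
    rw [Finset.prod_univ_sum]
    rw [Fintype.piFinset_univ]
  have hinner : ∀ ω : Fin n → A,
      ∑ σ : Fin n → B, (∏ i, if π (ω i) = σ i then q (ω i) else 0) * h σ
        = (∏ i, q (ω i)) * h (fun i => π (ω i)) := by
    intro ω
    rw [Finset.sum_eq_single (fun i => π (ω i))]
    · simp
    · intro σ _ hσ
      have hex : ∃ i, π (ω i) ≠ σ i := by
        by_contra hc
        push_neg at hc
        exact hσ (funext fun i => (hc i).symm)
      obtain ⟨i, hi⟩ := hex
      have hz : (∏ i, if π (ω i) = σ i then q (ω i) else 0) = 0 :=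
        Finset.prod_eq_zero (Finset.mem_univ i) (by rw [if_neg hi])
      rw [hz, zero_mul]
    · intro hmem
      exact absurd (Finset.mem_univ _) hmem
  calc ∑ ω : Fin n → A, iidPMF q n ω * h (fun i => π (ω i))
      = ∑ ω : Fin n → A,
          ∑ σ : Fin n → B, (∏ i, if π (ω i) = σ i then q (ω i) else 0) * h σ := by
        refine Finset.sum_congr rfl fun ω _ => ?_
        rw [hinner ω]; rfl
    _ = ∑ σ : Fin n → B,
          ∑ ω : Fin n → A, (∏ i, if π (ω i) = σ i then q (ω i) else 0) * h σ :=
        Finset.sum_comm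
    _ = ∑ σ : Fin n → B, iidPMF (pOf q π) n σ * h σ := by
        refine Finset.sum_congr rfl fun σ _ => ?_
        rw [hfact σ, Finset.sum_mul]

/-- One direction of Proposition 2. -/
lemma admissible_of_marg {t : ℕ} {X : Type*} [Fintype X] {Y : Fin t → Type*}
    [∀ l, Fintype (Y l)] {Xh : Fin t → Type*}
    (q' q'' : X × (∀ l, Y l) → ℝ)
    (δ : ∀ l, X → Xh l → ℝ) (d r : Fin t → ℝ)
    (hmarg : ∀ (l : Fin t) (x : X) (yl : Y l),
      pOf q' (fun ω => (ω.1, ω.2 l)) (x, yl) = pOf q'' (fun ω => (ω.1, ω.2 l)) (x, yl))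
    (h : Admissible q' δ d r) : Admissible q'' δ d r := by
  obtain ⟨hr, hmain⟩ := h
  refine ⟨hr, fun ε hε => ?_⟩
  obtain ⟨n, hn, M, hM, f, g, hrate, hdist⟩ := hmain ε hε
  refine ⟨n, hn, M, hM, f, g, hrate, fun l => ?_⟩
  set π : X × (∀ l', Y l') → X × Y l := fun ω => (ω.1, ω.2 l) with hπ
  set hl : (Fin n → X × Y l) → ℝ := fun σ =>
    (n : ℝ)⁻¹ * ∑ i, δ l (σ i).1
      (g l (fun k _ => f (fun i' => (σ i').1) k) (fun i' => (σ i').2) i) with hhl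
  have hmargfun : pOf q'' π = pOf q' π := by
    funext p
    obtain ⟨x, y⟩ := p
    exact (hmarg l x y).symm
  have h2 : (∑ ω : Fin n → X × (∀ l', Y l'),
      iidPMF q'' n ω *
        ((n : ℝ)⁻¹ * ∑ i, δ l (ω i).1
          (g l (fun k _ => f (fun i' => (ω i').1) k) (fun i' => (ω i').2 l) i)))
      = ∑ ω : Fin n → X × (∀ l', Y l'),
      iidPMF q' n ω *
        ((n : ℝ)⁻¹ * ∑ i, δ l (ω i).1
          (g l (fun k _ => f (fun i' => (ω i').1) k) (fun i' => (ω i').2 l) i)) := by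
    have e1 : ∀ q : X × (∀ l', Y l') → ℝ,
        (∑ ω : Fin n → X × (∀ l', Y l'),
          iidPMF q n ω *
            ((n : ℝ)⁻¹ * ∑ i, δ l (ω i).1
              (g l (fun k _ => f (fun i' => (ω i').1) k) (fun i' => (ω i').2 l) i)))
        = ∑ ω : Fin n → X × (∀ l', Y l'), iidPMF q n ω * hl (fun i => π (ω i)) := by
      intro q
      rfl
    rw [e1 q', e1 q'', sum_iid_proj q' π n hl, sum_iid_proj q'' π n hl, hmargfun]
  rw [h2]
  exact hdist l

/-- **The admissible rate region depends only on the pairwise marginals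
(Proposition 2).**  If the `(X, Y_l)`-marginals of two source pmfs `q'` and `q''`
coincide for every decoder `l`, then the corresponding `d`-admissible rate regions
coincide (for the same distortion measures). -/
theorem region_depends_only_on_pairwise_marginals
    {t : ℕ} {X : Type*} [Fintype X] {Y : Fin t → Type*} [∀ l, Fintype (Y l)]
    {Xh : Fin t → Type*} [∀ l, Fintype (Xh l)]
    (q' q'' : X × (∀ l, Y l) → ℝ) (hq' : IsPMF q') (hq'' : IsPMF q'')
    (δ : ∀ l, X → Xh l → ℝ) (hδ : ∀ l x xh, 0 ≤ δ l x xh)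
    (d : Fin t → ℝ) (hd : ∀ l, 0 ≤ d l)
    (hmarg : ∀ (l : Fin t) (x : X) (yl : Y l),
      pOf q' (fun ω => (ω.1, ω.2 l)) (x, yl) = pOf q'' (fun ω => (ω.1, ω.2 l)) (x, yl)) :
    ∀ r : Fin t → ℝ, Admissible q' δ d r ↔ Admissible q'' δ d r := by
  intro r
  constructor
  · exact admissible_of_marg q' q'' δ d r hmarg
  · exact admissible_of_marg q'' q' δ d r (fun l x yl => (hmarg l x yl).symm)

end
end

section
/- Lemma 1 (properties of the functional Φ): Suppose p ∈ P_v(d). For every S_j ⊆ [t] and l, l' ∈ [t] such that S_j ∩ [l] ≠ ∅ and S_j ∩ [l'] ≠ ∅: (i) Φ_p(S_j, l) ≤ Φ_p(S_j, l') whenever l' > l, and (ii) Φ_p(S_j, l) ≥ 0. -/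
open scoped BigOperators Classical

noncomputable section

/-- An ordered list `S_1, …, S_{2^t−1}` of all non-empty subsets of `[t]` arranged in
order of non-increasing cardinality.  (Injectivity together with non-emptiness forces
`S` to enumerate *all* of the `2^t − 1` non-empty subsets.) -/
structure SubsetList (t : ℕ) where
  S : Fin (2 ^ t - 1) → Finset (Fin t)
  nonempty : ∀ j, (S j).Nonempty
  injective : Function.Injective S
  sorted : ∀ j k : Fin (2 ^ t - 1), j ≤ k → (S k).card ≤ (S j).card

/-- The sample space carrying the `2^t − 1` auxiliary random variables (with alphabet
sizes `N`), the source `X` and the side-informations `Y_1, …, Y_t`. -/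
abbrev AuxSpace {t : ℕ} (N : Fin (2 ^ t - 1) → ℕ) (X : Type*) (Y : Fin t → Type*) :
    Type _ :=
  (∀ j, Fin (N j)) × X × (∀ l, Y l)

/-- `U_{S_i}` belongs to the tuple `A†_{S_j}`: `i < j`, `S_i ⊉ S_j` (so `U_{S_i}` is in
`A−_{S_j}`), and there is `k > j` with `S_k ∩ S_j ≠ ∅` (so `U_{S_k}` is in `A+_{S_j}`)
and `S_i ∩ S_k ≠ ∅`. -/
def dagMem {t : ℕ} (v : SubsetList t) (j i : Fin (2 ^ t - 1)) : Prop :=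
  i < j ∧ ¬ v.S j ⊆ v.S i ∧
    ∃ k : Fin (2 ^ t - 1), j < k ∧ (v.S k ∩ v.S j).Nonempty ∧ (v.S i ∩ v.S k).Nonempty

section Aux

variable {t : ℕ} {X : Type*} [Fintype X] {Y : Fin t → Type*} [∀ l, Fintype (Y l)]

/-- The functional `Φ_p(S_j, l) = I_p(X, A†_{S_j}; U_{S_j} | A⊃_{S_j})
− min_{l' ∈ S_j ∩ [l]} I_p(U_{S_j}; A‡_{S_j,l'}, Y_{l'} | A⊃_{S_j})`. -/
def Phi (v : SubsetList t) (N : Fin (2 ^ t - 1) → ℕ)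
    (p : AuxSpace N X Y → ℝ) (j : Fin (2 ^ t - 1)) (l : Fin t) : ℝ :=
  CMI p
      (fun ω => (ω.2.1, fun i : {i // dagMem v j i} => ω.1 i.1))
      (fun ω => ω.1 j)
      (fun ω => fun i : {i // v.S j ⊂ v.S i} => ω.1 i.1)
    - sInf ((fun l' : Fin t =>
        CMI p (fun ω => ω.1 j)
          (fun ω => ((fun i : {i // dagMem v j i ∧ l' ∈ v.S i} => ω.1 i.1), ω.2.2 l'))
          (fun ω => fun i : {i // v.S j ⊂ v.S i} => ω.1 i.1)) ''
        {l' : Fin t | l' ∈ v.S j ∧ l' ≤ l})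

/-- Membership `p ∈ P_v(d)`: `p` is a pmf on the auxiliary sample space whose
`(X, Y_1, …, Y_t)`-marginal is `q`, satisfying (P1) the Markov chain
`(U_{S_1},…,U_{S_{2^t−1}}) — X — (Y_1,…,Y_t)` and (P2) for every decoder `l` there is a
reconstruction function of `(Y_l, U_{{l}}, A⊃_{{l}})` meeting the distortion `d l`. -/
def MemPv {Xh : Fin t → Type*}
    (v : SubsetList t) (N : Fin (2 ^ t - 1) → ℕ)
    (q : X × (∀ l, Y l) → ℝ) (δ : ∀ l, X → Xh l → ℝ) (d : Fin t → ℝ)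
    (p : AuxSpace N X Y → ℝ) : Prop :=
  IsPMF p ∧
  (∀ z : X × (∀ l, Y l), pOf p (fun ω => ω.2) z = q z) ∧
  CondIndep p (fun ω => ω.1) (fun ω => ω.2.1) (fun ω => ω.2.2) ∧
  ∀ l : Fin t, ∃ (j : Fin (2 ^ t - 1)) (_ : v.S j = {l})
    (xh : Y l × Fin (N j) × (∀ i : {i // v.S j ⊂ v.S i}, Fin (N i.1)) → Xh l),
    ∑ ω, p ω * δ l ω.2.1 (xh (ω.2.2 l, ω.1 j, fun i => ω.1 i.1)) ≤ d l

/-- The rate constraints defining `ℛ_{p,v}(d)`:  `r ∈ ℝ≥0^t` and, for every `l ∈ [t]`,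
`Σ_{i≤l} r_i ≥ Σ_{S_j : S_j ∩ [l] ≠ ∅} Φ_p(S_j, l)`. -/
def RatesPV (v : SubsetList t) (N : Fin (2 ^ t - 1) → ℕ)
    (p : AuxSpace N X Y → ℝ) (r : Fin t → ℝ) : Prop :=
  (∀ l, 0 ≤ r l) ∧
  ∀ l : Fin t,
    ∑ j ∈ Finset.univ.filter
        (fun j : Fin (2 ^ t - 1) => ∃ k ∈ v.S j, k ≤ l), Phi v N p j l
      ≤ ∑ i ∈ Finset.univ.filter (fun i : Fin t => i ≤ l), r i

/-- The inner bound `ℛ_in(d)`: the closure of the convex hull of the union of the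
regions `ℛ_{p,v}(d)` over all subset lists `v` and all `p ∈ P_v(d)` (with all finite
auxiliary alphabet sizes `N`). -/
def Rin {Xh : Fin t → Type*}
    (q : X × (∀ l, Y l) → ℝ) (δ : ∀ l, X → Xh l → ℝ) (d : Fin t → ℝ) :
    Set (Fin t → ℝ) :=
  closure (convexHull ℝ
    (⋃ (v : SubsetList t) (N : Fin (2 ^ t - 1) → ℕ)
        (p : AuxSpace N X Y → ℝ) (_ : MemPv v N q δ d p),
      {r : Fin t → ℝ | RatesPV v N p r}))

end Aux

section Tools
variable {Ω α β γ α' : Type*} [Fintype Ω] {p : Ω → ℝ}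

lemma pOf_nonneg (h0 : ∀ ω, 0 ≤ p ω) (A : Ω → α) (a : α) : 0 ≤ pOf p A a := by
  apply Finset.sum_nonneg; intro ω _; split <;> simp [h0 ω]

lemma sum_pOf [Fintype α] (A : Ω → α) : ∑ a, pOf p A a = ∑ ω, p ω := by
  unfold pOf
  rw [Finset.sum_comm]
  refine Finset.sum_congr rfl fun ω _ => ?_
  simp

lemma pOf_comp (g : α → α') (hg : Function.Injective g) (A : Ω → α) (a : α) :
    pOf p (fun ω => g (A ω)) (g a) = pOf p A a := by
  unfold pOf
  refine Finset.sum_congr rfl fun ω _ => ?_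
  simp [hg.eq_iff]

lemma pOf_comp_zero (g : α → α') (A : Ω → α) (a' : α') (h : a' ∉ Set.range g) :
    pOf p (fun ω => g (A ω)) a' = 0 := by
  unfold pOf
  refine Finset.sum_eq_zero fun ω _ => ?_
  rw [if_neg]; exact fun he => h ⟨A ω, he⟩

lemma H2_comp [Fintype α] [Fintype α'] (g : α → α') (hg : Function.Injective g)
    (A : Ω → α) (A' : Ω → α') (hA : ∀ ω, A' ω = g (A ω)) : H2 p A' = H2 p A := by
  have hA' : A' = fun ω => g (A ω) := funext hA
  subst hA'
  unfold H2
  congr 1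
  rw [← Finset.sum_subset (Finset.image_subset_iff.2 fun a _ => Finset.mem_univ (g a))
      (fun a' _ ha' => by rw [pOf_comp_zero g A a' (by simp only [Finset.mem_image, Finset.mem_univ, true_and] at ha'; rintro ⟨x, rfl⟩; exact ha' ⟨x, Finset.mem_univ x, rfl⟩), zero_mul]),
    Finset.sum_image (fun x _ y _ h => hg h)]
  exact Finset.sum_congr rfl fun a _ => by rw [pOf_comp g hg]

lemma pOf_marg_b (A : Ω → α) (B : Ω → β) (C : Ω → γ) [Fintype β] (a : α) (c : γ) :
    pOf p (fun ω => (A ω, C ω)) (a, c)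
      = ∑ b, pOf p (fun ω => (A ω, B ω, C ω)) (a, b, c) := by
  unfold pOf
  rw [Finset.sum_comm]
  refine Finset.sum_congr rfl fun ω _ => ?_
  simp only [Prod.mk.injEq]
  by_cases h : A ω = a ∧ C ω = c
  · rw [if_pos h]
    rw [Finset.sum_eq_single (B ω)]
    · simp [h.1, h.2]
    · intro b _ hb; rw [if_neg]; tauto
    · simp
  · rw [if_neg h]
    refine (Finset.sum_eq_zero fun b _ => ?_).symm
    rw [if_neg]; tauto

lemma pOf_marg_a (A : Ω → α) (B : Ω → β) (C : Ω → γ) [Fintype α] (b : β) (c : γ) :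
    pOf p (fun ω => (B ω, C ω)) (b, c)
      = ∑ a, pOf p (fun ω => (A ω, B ω, C ω)) (a, b, c) := by
  unfold pOf
  rw [Finset.sum_comm]
  refine Finset.sum_congr rfl fun ω _ => ?_
  simp only [Prod.mk.injEq]
  by_cases h : B ω = b ∧ C ω = c
  · rw [if_pos h]
    rw [Finset.sum_eq_single (A ω)]
    · simp [h.1, h.2]
    · intro a _ ha; rw [if_neg]; tauto
    · simp
  · rw [if_neg h]
    refine (Finset.sum_eq_zero fun a _ => ?_).symm
    rw [if_neg]; tauto

lemma pOf_marg_one (B : Ω → β) (C : Ω → γ) [Fintype β] (c : γ) :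
    pOf p C c = ∑ b, pOf p (fun ω => (B ω, C ω)) (b, c) := by
  unfold pOf
  rw [Finset.sum_comm]
  refine Finset.sum_congr rfl fun ω _ => ?_
  simp only [Prod.mk.injEq]
  by_cases h : C ω = c
  · rw [if_pos h]
    rw [Finset.sum_eq_single (B ω)]
    · simp [h]
    · intro b _ hb; rw [if_neg]; tauto
    · simp
  · rw [if_neg h]
    refine (Finset.sum_eq_zero fun b _ => ?_).symm
    rw [if_neg]; tauto

lemma pOf_marg_ab (A : Ω → α) (B : Ω → β) (C : Ω → γ) [Fintype α] [Fintype β] (c : γ) :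
    pOf p C c = ∑ a, ∑ b, pOf p (fun ω => (A ω, B ω, C ω)) (a, b, c) := by
  rw [Finset.sum_comm]
  rw [pOf_marg_one B C c]
  exact Finset.sum_congr rfl fun b _ => pOf_marg_a A B C b c

lemma swap12 [Fintype α] [Fintype β] (f : α → β → γ → ℝ) (s : Finset γ) :
    ∑ a, ∑ b, ∑ c ∈ s, f a b c = ∑ b, ∑ a, ∑ c ∈ s, f a b c := Finset.sum_comm

lemma swap23 [Fintype β] [Fintype γ] (f : α → β → γ → ℝ) (s : Finset α) :
    ∑ a ∈ s, ∑ b, ∑ c, f a b c = ∑ a ∈ s, ∑ c, ∑ b, f a b c :=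
  Finset.sum_congr rfl fun _ _ => Finset.sum_comm

lemma CMI_eq_sum [Fintype α] [Fintype β] [Fintype γ] (A : Ω → α) (B : Ω → β) (C : Ω → γ) :
    CMI p A B C = ∑ a, ∑ b, ∑ c,
      pOf p (fun ω => (A ω, B ω, C ω)) (a, b, c) *
        (Real.logb 2 (pOf p (fun ω => (A ω, B ω, C ω)) (a, b, c))
          + Real.logb 2 (pOf p C c)
          - Real.logb 2 (pOf p (fun ω => (A ω, C ω)) (a, c))
          - Real.logb 2 (pOf p (fun ω => (B ω, C ω)) (b, c))) := by
  have hAC : H2 p (fun ω => (A ω, C ω)) = -∑ a, ∑ b, ∑ c,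
      pOf p (fun ω => (A ω, B ω, C ω)) (a, b, c) *
        Real.logb 2 (pOf p (fun ω => (A ω, C ω)) (a, c)) := by
    unfold H2
    rw [Fintype.sum_prod_type]
    congr 1
    refine Finset.sum_congr rfl fun a _ => ?_
    rw [Finset.sum_comm]
    refine Finset.sum_congr rfl fun c _ => ?_
    rw [pOf_marg_b A B C a c, Finset.sum_mul]
  have hBC : H2 p (fun ω => (B ω, C ω)) = -∑ a, ∑ b, ∑ c,
      pOf p (fun ω => (A ω, B ω, C ω)) (a, b, c) *
        Real.logb 2 (pOf p (fun ω => (B ω, C ω)) (b, c)) := by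
    unfold H2
    rw [Fintype.sum_prod_type, swap12]
    congr 1
    refine Finset.sum_congr rfl fun b _ => ?_
    rw [Finset.sum_comm]
    refine Finset.sum_congr rfl fun c _ => ?_
    rw [pOf_marg_a A B C b c, Finset.sum_mul]
  have hABC : H2 p (fun ω => (A ω, B ω, C ω)) = -∑ a, ∑ b, ∑ c,
      pOf p (fun ω => (A ω, B ω, C ω)) (a, b, c) *
        Real.logb 2 (pOf p (fun ω => (A ω, B ω, C ω)) (a, b, c)) := by
    unfold H2
    rw [Fintype.sum_prod_type]
    congr 1
    refine Finset.sum_congr rfl fun a _ => ?_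
    rw [Fintype.sum_prod_type]
  have hC : H2 p C = -∑ a, ∑ b, ∑ c,
      pOf p (fun ω => (A ω, B ω, C ω)) (a, b, c) * Real.logb 2 (pOf p C c) := by
    unfold H2
    rw [swap23, swap12]
    congr 1
    refine Finset.sum_congr rfl fun c _ => ?_
    rw [pOf_marg_ab A B C c, Finset.sum_mul]
    exact Finset.sum_congr rfl fun a _ => by rw [Finset.sum_mul]
  unfold CMI
  rw [hAC, hBC, hABC, hC]
  simp only [mul_add, mul_sub, Finset.sum_add_distrib, Finset.sum_sub_distrib]
  ring

lemma term_ineq (x u v w : ℝ) (hx : 0 ≤ x) (hu : x ≤ u) (hv : x ≤ v) (huw : u ≤ w) :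
    (x - u * v / w) / Real.log 2
      ≤ x * (Real.logb 2 x + Real.logb 2 w - Real.logb 2 u - Real.logb 2 v) := by
  have hlog2 : 0 < Real.log 2 := Real.log_pos one_lt_two
  rcases hx.eq_or_lt with h0 | h0
  · have hu0 : 0 ≤ u := hx.trans hu
    have hv0 : 0 ≤ v := hx.trans hv
    have hw0 : 0 ≤ w := hu0.trans huw
    rw [← h0]
    have : (0:ℝ) - u * v / w ≤ 0 := by
      have : (0:ℝ) ≤ u * v / w := by positivity
      linarith
    calc (0 - u * v / w) / Real.log 2 ≤ 0 := by
          apply div_nonpos_of_nonpos_of_nonneg this hlog2.le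
      _ = 0 * _ := by ring
  · have hu' : 0 < u := h0.trans_le hu
    have hv' : 0 < v := h0.trans_le hv
    have hw : 0 < w := hu'.trans_le huw
    have key : Real.log (u * v / (x * w)) ≤ u * v / (x * w) - 1 :=
      Real.log_le_sub_one_of_pos (by positivity)
    have hE : Real.logb 2 x + Real.logb 2 w - Real.logb 2 u - Real.logb 2 v
        = -(Real.log (u * v / (x * w)) / Real.log 2) := by
      unfold Real.logb
      rw [Real.log_div (by positivity) (by positivity),
        Real.log_mul hu'.ne' hv'.ne', Real.log_mul h0.ne' hw.ne']
      ring
    rw [hE]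
    have h1 : x * Real.log (u * v / (x * w)) ≤ x * (u * v / (x * w) - 1) :=
      mul_le_mul_of_nonneg_left key hx
    have h2 : x * (u * v / (x * w) - 1) = u * v / w - x := by
      field_simp
    have h3 : x - u * v / w ≤ -(x * Real.log (u * v / (x * w))) := by
      rw [h2] at h1; linarith
    have h4 : x * -(Real.log (u * v / (x * w)) / Real.log 2)
        = (-(x * Real.log (u * v / (x * w)))) / Real.log 2 := by ring
    rw [h4]
    exact div_le_div_of_nonneg_right h3 hlog2.le

lemma CMI_nonneg [Fintype α] [Fintype β] [Fintype γ]
    (h0 : ∀ ω, 0 ≤ p ω) (h1 : ∑ ω, p ω = 1)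
    (A : Ω → α) (B : Ω → β) (C : Ω → γ) : 0 ≤ CMI p A B C := by
  classical
  set P3 : α → β → γ → ℝ := fun a b c => pOf p (fun ω => (A ω, B ω, C ω)) (a, b, c) with hP3
  set Q : α → β → γ → ℝ := fun a b c =>
    pOf p (fun ω => (A ω, C ω)) (a, c) * pOf p (fun ω => (B ω, C ω)) (b, c) / pOf p C c
    with hQ
  have hP3nn : ∀ a b c, 0 ≤ P3 a b c := fun a b c => pOf_nonneg h0 _ _
  -- termwise bound
  have hterm : ∀ a b c, (P3 a b c - Q a b c) / Real.log 2 ≤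
      P3 a b c * (Real.logb 2 (P3 a b c) + Real.logb 2 (pOf p C c)
        - Real.logb 2 (pOf p (fun ω => (A ω, C ω)) (a, c))
        - Real.logb 2 (pOf p (fun ω => (B ω, C ω)) (b, c))) := by
    intro a b c
    have hu : P3 a b c ≤ pOf p (fun ω => (A ω, C ω)) (a, c) := by
      rw [pOf_marg_b A B C a c]
      exact Finset.single_le_sum (fun b' _ => hP3nn a b' c) (Finset.mem_univ b)
    have hv : P3 a b c ≤ pOf p (fun ω => (B ω, C ω)) (b, c) := by
      rw [pOf_marg_a A B C b c]
      exact Finset.single_le_sum (fun a' _ => hP3nn a' b c) (Finset.mem_univ a)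
    have huw : pOf p (fun ω => (A ω, C ω)) (a, c) ≤ pOf p C c := by
      rw [pOf_marg_ab A B C c, pOf_marg_b A B C a c]
      exact Finset.single_le_sum
        (fun a' _ => Finset.sum_nonneg fun b' _ => hP3nn a' b' c) (Finset.mem_univ a)
    have := term_ineq (P3 a b c) (pOf p (fun ω => (A ω, C ω)) (a, c))
      (pOf p (fun ω => (B ω, C ω)) (b, c)) (pOf p C c) (hP3nn a b c) hu hv huw
    calc (P3 a b c - Q a b c) / Real.log 2
        = (P3 a b c - pOf p (fun ω => (A ω, C ω)) (a, c) *
            pOf p (fun ω => (B ω, C ω)) (b, c) / pOf p C c) / Real.log 2 := rfl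
      _ ≤ _ := this
  -- total mass of P3 is one
  have hsumP3 : ∑ a, ∑ b, ∑ c, P3 a b c = 1 := by
    have := sum_pOf (p := p) (fun ω => (A ω, B ω, C ω))
    rw [h1] at this
    rw [← this, Fintype.sum_prod_type]
    exact Finset.sum_congr rfl fun a _ => by rw [Fintype.sum_prod_type]
  -- total mass of Q is at most one
  have hsumQ : ∑ a, ∑ b, ∑ c, Q a b c ≤ 1 := by
    have hmargA : ∀ c, ∑ a, pOf p (fun ω => (A ω, C ω)) (a, c) = pOf p C c := by
      intro c
      rw [pOf_marg_ab A B C c]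
      exact Finset.sum_congr rfl fun a _ => pOf_marg_b A B C a c
    have hmargB : ∀ c, ∑ b, pOf p (fun ω => (B ω, C ω)) (b, c) = pOf p C c := by
      intro c
      rw [pOf_marg_ab A B C c, Finset.sum_comm]
      exact Finset.sum_congr rfl fun b _ => pOf_marg_a A B C b c
    have step : ∀ c, ∑ a, ∑ b, Q a b c ≤ pOf p C c := by
      intro c
      have : ∑ a, ∑ b, Q a b c
          = (∑ a, pOf p (fun ω => (A ω, C ω)) (a, c)) *
            (∑ b, pOf p (fun ω => (B ω, C ω)) (b, c)) / pOf p C c := by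
        rw [Finset.sum_mul, Finset.sum_div]
        refine Finset.sum_congr rfl fun a _ => ?_
        rw [Finset.mul_sum, Finset.sum_div]
      rw [this, hmargA, hmargB]
      by_cases hc : pOf p C c = 0
      · rw [hc]; simp
      · rw [mul_div_assoc, div_self hc, mul_one]
    calc ∑ a, ∑ b, ∑ c, Q a b c = ∑ c, ∑ a, ∑ b, Q a b c := by
          rw [swap23, swap12]
      _ ≤ ∑ c, pOf p C c := Finset.sum_le_sum fun c _ => step c
      _ = 1 := by rw [sum_pOf, h1]
  rw [CMI_eq_sum]
  calc (0:ℝ) ≤ (1 - ∑ a, ∑ b, ∑ c, Q a b c) / Real.log 2 := by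
        apply div_nonneg (by linarith) (Real.log_pos one_lt_two).le
    _ = ∑ a, ∑ b, ∑ c, (P3 a b c - Q a b c) / Real.log 2 := by
        rw [← hsumP3]
        rw [← Finset.sum_sub_distrib, Finset.sum_div]
        refine Finset.sum_congr rfl fun a _ => ?_
        rw [← Finset.sum_sub_distrib, Finset.sum_div]
        refine Finset.sum_congr rfl fun b _ => ?_
        rw [← Finset.sum_sub_distrib, Finset.sum_div]
    _ ≤ _ := by
        refine Finset.sum_le_sum fun a _ => Finset.sum_le_sum fun b _ =>
          Finset.sum_le_sum fun c _ => hterm a b c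

lemma CMI_eq_zero_of_factor [Fintype α] [Fintype β] [Fintype γ]
    (h0 : ∀ ω, 0 ≤ p ω)
    (A : Ω → α) (B : Ω → β) (C : Ω → γ)
    (hyp : ∀ a b c, pOf p (fun ω => (A ω, B ω, C ω)) (a, b, c) * pOf p C c
      = pOf p (fun ω => (A ω, C ω)) (a, c) * pOf p (fun ω => (B ω, C ω)) (b, c)) :
    CMI p A B C = 0 := by
  rw [CMI_eq_sum]
  refine Finset.sum_eq_zero fun a _ => Finset.sum_eq_zero fun b _ =>
    Finset.sum_eq_zero fun c _ => ?_
  rcases (pOf_nonneg h0 (fun ω => (A ω, B ω, C ω)) (a, b, c)).eq_or_lt with hz | hz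
  · rw [← hz, zero_mul]
  · have hu : pOf p (fun ω => (A ω, B ω, C ω)) (a, b, c) ≤ pOf p (fun ω => (A ω, C ω)) (a, c) := by
      rw [pOf_marg_b A B C a c]
      exact Finset.single_le_sum
        (f := fun b' => pOf p (fun ω => (A ω, B ω, C ω)) (a, b', c))
        (fun b' _ => pOf_nonneg h0 _ _) (Finset.mem_univ b)
    have hv : pOf p (fun ω => (A ω, B ω, C ω)) (a, b, c) ≤ pOf p (fun ω => (B ω, C ω)) (b, c) := by
      rw [pOf_marg_a A B C b c]
      exact Finset.single_le_sum
        (f := fun a' => pOf p (fun ω => (A ω, B ω, C ω)) (a', b, c))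
        (fun a' _ => pOf_nonneg h0 _ _) (Finset.mem_univ a)
    have huw : pOf p (fun ω => (A ω, C ω)) (a, c) ≤ pOf p C c := by
      rw [pOf_marg_ab A B C c, pOf_marg_b A B C a c]
      exact Finset.single_le_sum
        (f := fun a' => ∑ b', pOf p (fun ω => (A ω, B ω, C ω)) (a', b', c))
        (fun a' _ => Finset.sum_nonneg fun b' _ => pOf_nonneg h0 _ _) (Finset.mem_univ a)
    have hu' : 0 < pOf p (fun ω => (A ω, C ω)) (a, c) := hz.trans_le hu
    have hv' : 0 < pOf p (fun ω => (B ω, C ω)) (b, c) := hz.trans_le hv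
    have hw' : 0 < pOf p C c := hu'.trans_le huw
    have : Real.logb 2 (pOf p (fun ω => (A ω, B ω, C ω)) (a, b, c)) + Real.logb 2 (pOf p C c)
        - Real.logb 2 (pOf p (fun ω => (A ω, C ω)) (a, c))
        - Real.logb 2 (pOf p (fun ω => (B ω, C ω)) (b, c)) = 0 := by
      rw [← Real.logb_mul hz.ne' hw'.ne', hyp a b c,
        Real.logb_mul hu'.ne' hv'.ne']
      ring
    rw [this, mul_zero]

lemma CMI_comm [Fintype α] [Fintype β] [Fintype γ]
    (A : Ω → α) (B : Ω → β) (C : Ω → γ) : CMI p A B C = CMI p B A C := by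
  have h : H2 p (fun ω => (B ω, A ω, C ω)) = H2 p (fun ω => (A ω, B ω, C ω)) :=
    H2_comp (fun z : α × β × γ => (z.2.1, z.1, z.2.2))
      (fun z z' h => by
        obtain ⟨a, b, c⟩ := z; obtain ⟨a', b', c'⟩ := z'
        simp only [Prod.mk.injEq] at h ⊢; tauto)
      (fun ω => (A ω, B ω, C ω)) (fun ω => (B ω, A ω, C ω)) (fun ω => rfl)
  unfold CMI
  rw [h]
  ring

lemma CMI_relabel_mid {β' : Type*} [Fintype α] [Fintype β] [Fintype β'] [Fintype γ]
    (A : Ω → α) (B : Ω → β) (B' : Ω → β') (C : Ω → γ)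
    (g : β → β') (hg : Function.Injective g) (hB : ∀ ω, B' ω = g (B ω)) :
    CMI p A B' C = CMI p A B C := by
  unfold CMI
  have h1 : H2 p (fun ω => (B' ω, C ω)) = H2 p (fun ω => (B ω, C ω)) :=
    H2_comp (fun z : β × γ => (g z.1, z.2))
      (fun z z' h => by
        obtain ⟨b, c⟩ := z; obtain ⟨b', c'⟩ := z'
        simp only [Prod.mk.injEq] at h ⊢
        exact ⟨hg h.1, h.2⟩)
      (fun ω => (B ω, C ω)) (fun ω => (B' ω, C ω)) (fun ω => by simp [hB ω])
  have h2 : H2 p (fun ω => (A ω, B' ω, C ω)) = H2 p (fun ω => (A ω, B ω, C ω)) :=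
    H2_comp (fun z : α × β × γ => (z.1, g z.2.1, z.2.2))
      (fun z z' h => by
        obtain ⟨a, b, c⟩ := z; obtain ⟨a', b', c'⟩ := z'
        simp only [Prod.mk.injEq] at h ⊢
        exact ⟨h.1, hg h.2.1, h.2.2⟩)
      (fun ω => (A ω, B ω, C ω)) (fun ω => (A ω, B' ω, C ω)) (fun ω => by simp [hB ω])
  rw [h1, h2]

lemma CMI_relabel_right {γ' : Type*} [Fintype α] [Fintype β] [Fintype γ] [Fintype γ']
    (A : Ω → α) (B : Ω → β) (C : Ω → γ) (C' : Ω → γ')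
    (g : γ → γ') (hg : Function.Injective g) (hC : ∀ ω, C' ω = g (C ω)) :
    CMI p A B C' = CMI p A B C := by
  unfold CMI
  have h1 : H2 p (fun ω => (A ω, C' ω)) = H2 p (fun ω => (A ω, C ω)) :=
    H2_comp (fun z : α × γ => (z.1, g z.2))
      (fun z z' h => by
        obtain ⟨a, c⟩ := z; obtain ⟨a', c'⟩ := z'
        simp only [Prod.mk.injEq] at h ⊢
        exact ⟨h.1, hg h.2⟩)
      (fun ω => (A ω, C ω)) (fun ω => (A ω, C' ω)) (fun ω => by simp [hC ω])
  have h2 : H2 p (fun ω => (B ω, C' ω)) = H2 p (fun ω => (B ω, C ω)) :=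
    H2_comp (fun z : β × γ => (z.1, g z.2))
      (fun z z' h => by
        obtain ⟨b, c⟩ := z; obtain ⟨b', c'⟩ := z'
        simp only [Prod.mk.injEq] at h ⊢
        exact ⟨h.1, hg h.2⟩)
      (fun ω => (B ω, C ω)) (fun ω => (B ω, C' ω)) (fun ω => by simp [hC ω])
  have h3 : H2 p (fun ω => (A ω, B ω, C' ω)) = H2 p (fun ω => (A ω, B ω, C ω)) :=
    H2_comp (fun z : α × β × γ => (z.1, z.2.1, g z.2.2))
      (fun z z' h => by
        obtain ⟨a, b, c⟩ := z; obtain ⟨a', b', c'⟩ := z'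
        simp only [Prod.mk.injEq] at h ⊢
        exact ⟨h.1, h.2.1, hg h.2.2⟩)
      (fun ω => (A ω, B ω, C ω)) (fun ω => (A ω, B ω, C' ω)) (fun ω => by simp [hC ω])
  have h4 : H2 p C' = H2 p C := H2_comp g hg C C' hC
  rw [h1, h2, h3, h4]

lemma CMI_chain {β₁ β₂ : Type*} [Fintype α] [Fintype β₁] [Fintype β₂] [Fintype γ]
    (A : Ω → α) (B₁ : Ω → β₁) (B₂ : Ω → β₂) (C : Ω → γ) :
    CMI p A (fun ω => (B₁ ω, B₂ ω)) C
      = CMI p A B₁ C + CMI p A B₂ (fun ω => (B₁ ω, C ω)) := by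
  unfold CMI
  have h1 : H2 p (fun ω => ((B₁ ω, B₂ ω), C ω)) = H2 p (fun ω => (B₂ ω, B₁ ω, C ω)) :=
    H2_comp (fun z : β₂ × β₁ × γ => ((z.2.1, z.1), z.2.2))
      (fun z z' h => by
        obtain ⟨b2, b1, c⟩ := z; obtain ⟨b2', b1', c'⟩ := z'
        simp only [Prod.mk.injEq] at h ⊢
        tauto)
      (fun ω => (B₂ ω, B₁ ω, C ω)) (fun ω => ((B₁ ω, B₂ ω), C ω)) (fun ω => rfl)
  have h2 : H2 p (fun ω => (A ω, (B₁ ω, B₂ ω), C ω))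
      = H2 p (fun ω => (A ω, B₂ ω, B₁ ω, C ω)) :=
    H2_comp (fun z : α × β₂ × β₁ × γ => (z.1, (z.2.2.1, z.2.1), z.2.2.2))
      (fun z z' h => by
        obtain ⟨a, b2, b1, c⟩ := z; obtain ⟨a', b2', b1', c'⟩ := z'
        simp only [Prod.mk.injEq] at h ⊢
        tauto)
      (fun ω => (A ω, B₂ ω, B₁ ω, C ω)) (fun ω => (A ω, (B₁ ω, B₂ ω), C ω)) (fun ω => rfl)
  rw [h1, h2]
  ring

lemma CMI_dataproc {β' : Type*} [Fintype α] [Fintype β] [Fintype β'] [Fintype γ]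
    (h0 : ∀ ω, 0 ≤ p ω) (h1 : ∑ ω, p ω = 1)
    (A : Ω → α) (B : Ω → β) (B' : Ω → β') (C : Ω → γ)
    (f : β → β') (hB : ∀ ω, B' ω = f (B ω)) :
    CMI p A B' C ≤ CMI p A B C := by
  have hrel : CMI p A (fun ω => (B' ω, B ω)) C = CMI p A B C :=
    CMI_relabel_mid A B (fun ω => (B' ω, B ω)) C (fun b => (f b, b))
      (fun b b' h => by simpa using (Prod.mk.injEq _ _ _ _ ▸ h).2)
      (fun ω => by simp [hB ω])
  have hchain := CMI_chain (p := p) A B' B C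
  have hnn := CMI_nonneg h0 h1 A B (fun ω => (B' ω, C ω))
  linarith [hrel, hchain]

end Tools


lemma key_ineq {t : ℕ} {X : Type*} [Fintype X] {Y : Fin t → Type*} [∀ l, Fintype (Y l)]
    (v : SubsetList t) (N : Fin (2 ^ t - 1) → ℕ) (p : AuxSpace N X Y → ℝ)
    (h0 : ∀ ω, 0 ≤ p ω) (h1 : ∑ ω, p ω = 1)
    (hMC : CondIndep p (fun ω => ω.1) (fun ω => ω.2.1) (fun ω => ω.2.2))
    (j : Fin (2 ^ t - 1)) (k : Fin t) :
    CMI p (fun ω => ω.1 j)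
        (fun ω => ((fun i : {i // dagMem v j i ∧ k ∈ v.S i} => ω.1 i.1), ω.2.2 k))
        (fun ω => fun i : {i // v.S j ⊂ v.S i} => ω.1 i.1)
      ≤ CMI p
        (fun ω => (ω.2.1, fun i : {i // dagMem v j i} => ω.1 i.1))
        (fun ω => ω.1 j)
        (fun ω => fun i : {i // v.S j ⊂ v.S i} => ω.1 i.1) := by
  classical
  -- abbreviations (as plain terms, to keep everything syntactic)
  -- U ω = ω.1 j, Xv ω = ω.2.1, Yv ω = ω.2.2
  -- D ω = dag-tuple, G ω = superset-tuple, E ω = ddag-tuple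
  -- Step A : data processing
  have hA : CMI p (fun ω : AuxSpace N X Y => ω.1 j)
      (fun ω => ((fun i : {i // dagMem v j i ∧ k ∈ v.S i} => ω.1 i.1), ω.2.2 k))
      (fun ω => fun i : {i // v.S j ⊂ v.S i} => ω.1 i.1)
      ≤ CMI p (fun ω : AuxSpace N X Y => ω.1 j)
        (fun ω => ((ω.2.1, fun i : {i // dagMem v j i} => ω.1 i.1), ω.2.2))
        (fun ω => fun i : {i // v.S j ⊂ v.S i} => ω.1 i.1) :=
    CMI_dataproc h0 h1 _ _ _ _
      (fun z : (X × (∀ i : {i // dagMem v j i}, Fin (N i.1))) × (∀ l, Y l) =>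
        ((fun i : {i // dagMem v j i ∧ k ∈ v.S i} => z.1.2 ⟨i.1, i.2.1⟩), z.2 k))
      (fun ω => rfl)
  -- Step B : chain rule splitting off Yv
  have hB : CMI p (fun ω : AuxSpace N X Y => ω.1 j)
      (fun ω => ((ω.2.1, fun i : {i // dagMem v j i} => ω.1 i.1), ω.2.2))
      (fun ω => fun i : {i // v.S j ⊂ v.S i} => ω.1 i.1)
      = CMI p (fun ω : AuxSpace N X Y => ω.1 j)
          (fun ω => (ω.2.1, fun i : {i // dagMem v j i} => ω.1 i.1))
          (fun ω => fun i : {i // v.S j ⊂ v.S i} => ω.1 i.1)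
        + CMI p (fun ω : AuxSpace N X Y => ω.1 j) (fun ω => ω.2.2)
          (fun ω => ((ω.2.1, fun i : {i // dagMem v j i} => ω.1 i.1),
            fun i : {i // v.S j ⊂ v.S i} => ω.1 i.1)) :=
    CMI_chain _ _ _ _
  -- Step C : the Markov term is nonpositive
  have hC : CMI p (fun ω : AuxSpace N X Y => ω.1 j) (fun ω => ω.2.2)
      (fun ω => ((ω.2.1, fun i : {i // dagMem v j i} => ω.1 i.1),
        fun i : {i // v.S j ⊂ v.S i} => ω.1 i.1)) ≤ 0 := by
    have hrel : CMI p (fun ω : AuxSpace N X Y => ω.1 j) (fun ω => ω.2.2)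
        (fun ω => ((ω.2.1, fun i : {i // dagMem v j i} => ω.1 i.1),
          fun i : {i // v.S j ⊂ v.S i} => ω.1 i.1))
        = CMI p (fun ω : AuxSpace N X Y => ω.1 j) (fun ω => ω.2.2)
          (fun ω => (((fun i : {i // dagMem v j i} => ω.1 i.1),
            fun i : {i // v.S j ⊂ v.S i} => ω.1 i.1), ω.2.1)) :=
      CMI_relabel_right _ _ _ _
        (fun z : ((∀ i : {i // dagMem v j i}, Fin (N i.1)) ×
            (∀ i : {i // v.S j ⊂ v.S i}, Fin (N i.1))) × X =>
          ((z.2, z.1.1), z.1.2))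
        (fun z z' h => by
          obtain ⟨⟨d, g⟩, x⟩ := z; obtain ⟨⟨d', g'⟩, x'⟩ := z'
          simp only [Prod.mk.injEq] at h ⊢
          tauto)
        (fun ω => rfl)
    have hcomm : CMI p (fun ω : AuxSpace N X Y => ω.1 j) (fun ω => ω.2.2)
        (fun ω => (((fun i : {i // dagMem v j i} => ω.1 i.1),
          fun i : {i // v.S j ⊂ v.S i} => ω.1 i.1), ω.2.1))
        = CMI p (fun ω : AuxSpace N X Y => ω.2.2) (fun ω => ω.1 j)
          (fun ω => (((fun i : {i // dagMem v j i} => ω.1 i.1),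
            fun i : {i // v.S j ⊂ v.S i} => ω.1 i.1), ω.2.1)) :=
      CMI_comm _ _ _
    have hchain : CMI p (fun ω : AuxSpace N X Y => ω.2.2)
        (fun ω => (((fun i : {i // dagMem v j i} => ω.1 i.1),
          fun i : {i // v.S j ⊂ v.S i} => ω.1 i.1), ω.1 j))
        (fun ω => ω.2.1)
        = CMI p (fun ω : AuxSpace N X Y => ω.2.2)
            (fun ω => ((fun i : {i // dagMem v j i} => ω.1 i.1),
              fun i : {i // v.S j ⊂ v.S i} => ω.1 i.1))
            (fun ω => ω.2.1)
          + CMI p (fun ω : AuxSpace N X Y => ω.2.2) (fun ω => ω.1 j)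
            (fun ω => (((fun i : {i // dagMem v j i} => ω.1 i.1),
              fun i : {i // v.S j ⊂ v.S i} => ω.1 i.1), ω.2.1)) :=
      CMI_chain _ _ _ _
    have hdp : CMI p (fun ω : AuxSpace N X Y => ω.2.2)
        (fun ω => (((fun i : {i // dagMem v j i} => ω.1 i.1),
          fun i : {i // v.S j ⊂ v.S i} => ω.1 i.1), ω.1 j))
        (fun ω => ω.2.1)
        ≤ CMI p (fun ω : AuxSpace N X Y => ω.2.2) (fun ω => ω.1)
          (fun ω => ω.2.1) :=
      CMI_dataproc h0 h1 _ _ _ _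
        (fun u : ∀ j', Fin (N j') =>
          (((fun i : {i // dagMem v j i} => u i.1),
            fun i : {i // v.S j ⊂ v.S i} => u i.1), u j))
        (fun ω => rfl)
    have hzero : CMI p (fun ω : AuxSpace N X Y => ω.2.2) (fun ω => ω.1)
        (fun ω => ω.2.1) = 0 := by
      have hsw : CMI p (fun ω : AuxSpace N X Y => ω.2.2) (fun ω => ω.1)
          (fun ω => ω.2.1)
          = CMI p (fun ω : AuxSpace N X Y => ω.1) (fun ω => ω.2.2)
            (fun ω => ω.2.1) := CMI_comm _ _ _
      rw [hsw]
      refine CMI_eq_zero_of_factor h0 _ _ _ ?_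
      intro u y x
      have e1 : pOf p (fun ω : AuxSpace N X Y => (ω.1, ω.2.2, ω.2.1)) (u, y, x)
          = pOf p (fun ω : AuxSpace N X Y => (ω.1, ω.2.1, ω.2.2)) (u, x, y) := by
        have := pOf_comp (p := p)
          (fun z : (∀ j', Fin (N j')) × X × (∀ l, Y l) => (z.1, z.2.2, z.2.1))
          (fun z z' h => by
            obtain ⟨a, b, c⟩ := z; obtain ⟨a', b', c'⟩ := z'
            simp only [Prod.mk.injEq] at h ⊢
            tauto)
          (fun ω : AuxSpace N X Y => (ω.1, ω.2.1, ω.2.2)) (u, x, y)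
        simpa using this
      have e2 : pOf p (fun ω : AuxSpace N X Y => (ω.2.2, ω.2.1)) (y, x)
          = pOf p (fun ω : AuxSpace N X Y => (ω.2.1, ω.2.2)) (x, y) := by
        have := pOf_comp (p := p)
          (fun z : X × (∀ l, Y l) => (z.2, z.1))
          (fun z z' h => by
            obtain ⟨a, b⟩ := z; obtain ⟨a', b'⟩ := z'
            simp only [Prod.mk.injEq] at h ⊢
            tauto)
          (fun ω : AuxSpace N X Y => (ω.2.1, ω.2.2)) (x, y)
        simpa using this
      rw [e1, e2]
      simpa using hMC u x y
    have hnn : 0 ≤ CMI p (fun ω : AuxSpace N X Y => ω.2.2)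
        (fun ω => ((fun i : {i // dagMem v j i} => ω.1 i.1),
          fun i : {i // v.S j ⊂ v.S i} => ω.1 i.1))
        (fun ω => ω.2.1) := CMI_nonneg h0 h1 _ _ _
    rw [hrel, hcomm]
    linarith [hchain, hdp, hzero, hnn]
  have hfin : CMI p (fun ω : AuxSpace N X Y => ω.1 j)
      (fun ω => (ω.2.1, fun i : {i // dagMem v j i} => ω.1 i.1))
      (fun ω => fun i : {i // v.S j ⊂ v.S i} => ω.1 i.1)
      = CMI p (fun ω : AuxSpace N X Y => (ω.2.1, fun i : {i // dagMem v j i} => ω.1 i.1))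
        (fun ω => ω.1 j)
        (fun ω => fun i : {i // v.S j ⊂ v.S i} => ω.1 i.1) := CMI_comm _ _ _
  linarith [hA, hB, hC, hfin]

/-- **Properties of the functional `Φ` (Lemma 1).**  Suppose `p ∈ P_v(d)`.  For every
subset `S_j` and `l, l' ∈ [t]` with `S_j ∩ [l] ≠ ∅` and `S_j ∩ [l'] ≠ ∅`:
(i) `Φ_p(S_j, l) ≤ Φ_p(S_j, l')` whenever `l' > l`, and (ii) `Φ_p(S_j, l) ≥ 0`. -/
theorem Phi_properties
    {t : ℕ} {X : Type*} [Fintype X] {Y : Fin t → Type*} [∀ l, Fintype (Y l)]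
    {Xh : Fin t → Type*} [∀ l, Fintype (Xh l)]
    (q : X × (∀ l, Y l) → ℝ) (hq : IsPMF q)
    (δ : ∀ l, X → Xh l → ℝ) (hδ : ∀ l x xh, 0 ≤ δ l x xh)
    (d : Fin t → ℝ) (hd : ∀ l, 0 ≤ d l)
    (v : SubsetList t) (N : Fin (2 ^ t - 1) → ℕ)
    (p : AuxSpace N X Y → ℝ) (hp : MemPv v N q δ d p)
    (j : Fin (2 ^ t - 1)) (l l' : Fin t)
    (hl : ∃ k ∈ v.S j, k ≤ l) (hl' : ∃ k ∈ v.S j, k ≤ l') :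
    (l < l' → Phi v N p j l ≤ Phi v N p j l') ∧ 0 ≤ Phi v N p j l := by
  obtain ⟨⟨h0, h1⟩, hmarg, hMC, hrec⟩ := hp
  have hbddl : ∀ m : Fin t, BddBelow ((fun l' : Fin t =>
      CMI p (fun ω => ω.1 j)
        (fun ω => ((fun i : {i // dagMem v j i ∧ l' ∈ v.S i} => ω.1 i.1), ω.2.2 l'))
        (fun ω => fun i : {i // v.S j ⊂ v.S i} => ω.1 i.1)) ''
      {l' : Fin t | l' ∈ v.S j ∧ l' ≤ m}) := fun m => (Set.toFinite _).bddBelow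
  constructor
  · intro hlt
    unfold Phi
    refine sub_le_sub_left ?_ _
    refine csInf_le_csInf (hbddl l') ?_ ?_
    · obtain ⟨k, hk, hkl⟩ := hl
      exact ⟨_, ⟨k, ⟨hk, hkl⟩, rfl⟩⟩
    · exact Set.image_mono fun x hx => ⟨hx.1, hx.2.trans hlt.le⟩
  · obtain ⟨k, hk, hkl⟩ := hl
    unfold Phi
    rw [sub_nonneg]
    have hle : sInf ((fun l' : Fin t =>
        CMI p (fun ω => ω.1 j)
          (fun ω => ((fun i : {i // dagMem v j i ∧ l' ∈ v.S i} => ω.1 i.1), ω.2.2 l'))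
          (fun ω => fun i : {i // v.S j ⊂ v.S i} => ω.1 i.1)) ''
        {l' : Fin t | l' ∈ v.S j ∧ l' ≤ l})
        ≤ CMI p (fun ω => ω.1 j)
          (fun ω => ((fun i : {i // dagMem v j i ∧ k ∈ v.S i} => ω.1 i.1), ω.2.2 k))
          (fun ω => fun i : {i // v.S j ⊂ v.S i} => ω.1 i.1) :=
      csInf_le (hbddl l) ⟨k, ⟨hk, hkl⟩, rfl⟩
    have h2 := key_ineq v N p h0 h1 hMC j k
    linarith

end
end

section
/- Counterexample to Heegard–Berger's Theorem 2 (information-theoretic core): There exist random variables X, U₁₂, U₁₃, U₂₃ on a common finite probability space such that X is uniformly distributed on a three-element alphabet (so H(X) = log₂ 3 > 0), I(X; U₁₂) + I(X; U₁₃) + I(X; U₂₃) = 0, and yet H(X | U₁₂, U₁₃) = H(X | U₁₂, U₂₃) = H(X | U₁₃, U₂₃) = 0. (Hence, in the three-decoder problem with trivial side-information and zero Hamming distortions, the Heegard–Berger functional R₀(0,0,0) evaluates to 0 while the true rate-distortion function equals H(X) > 0.) -/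
open scoped BigOperators Classical

noncomputable section

def pu : Fin 9 → ℝ := fun _ => 1/9
def Xf : Fin 9 → ZMod 3 := fun ω => (ω.val : ZMod 3)
def Wf : Fin 9 → ZMod 3 := fun ω => ((ω.val / 3 : ℕ) : ZMod 3)
def U13f : Fin 9 → ZMod 3 := fun ω => Wf ω + Xf ω
def U23f : Fin 9 → ZMod 3 := fun ω => Wf ω - Xf ω

lemma pOf_eq_third :
    (∀ a, pOf pu Xf a = 1/3) ∧ (∀ a, pOf pu Wf a = 1/3) ∧
    (∀ a, pOf pu U13f a = 1/3) ∧ (∀ a, pOf pu U23f a = 1/3) := by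
  refine ⟨?_, ?_, ?_, ?_⟩ <;> intro a <;>
    rcases (show ∀ b : ZMod 3, b = 0 ∨ b = 1 ∨ b = 2 by decide) a with rfl | rfl | rfl <;>
    · simp only [pOf, pu, Xf, Wf, U13f, U23f, Fin.sum_univ_succ, Finset.sum_empty,
        Fin.val_zero, Fin.val_succ]
      simp (config := { decide := true }) only []
      norm_num

/-- Entropy of a uniform `ZMod 3`-valued variable. -/
lemma H2_of_third {A : Fin 9 → ZMod 3} (h : ∀ a, pOf pu A a = 1/3) :
    H2 pu A = Real.logb 2 3 := by
  have : ∑ a : ZMod 3, pOf pu A a * Real.logb 2 (pOf pu A a)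
      = ∑ _a : ZMod 3, (1/3 : ℝ) * Real.logb 2 (1/3) := by
    refine Finset.sum_congr rfl fun a _ => by rw [h a]
  rw [H2, this, Finset.sum_const]
  have hcard : (Finset.univ : Finset (ZMod 3)).card = 3 := by decide
  rw [hcard]
  have : Real.logb 2 (1/3 : ℝ) = -Real.logb 2 3 := by
    rw [one_div, Real.logb_inv]
  rw [this]
  ring

/-- Entropy of an injective variable on `Fin 9` under the uniform pmf. -/
lemma H2_of_inj {β : Type*} [Fintype β] [DecidableEq β] {B : Fin 9 → β}
    (hB : Function.Injective B) : H2 pu B = 2 * Real.logb 2 3 := by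
  have hval : ∀ ω, pOf pu B (B ω) = 1/9 := by
    intro ω
    simp only [pOf, pu, hB.eq_iff]
    rw [Finset.sum_ite_eq' Finset.univ ω (fun _ => (1/9 : ℝ))]
    simp
  have hzero : ∀ b, b ∉ Finset.univ.image B → pOf pu B b = 0 := by
    intro b hb
    simp only [Finset.mem_image, Finset.mem_univ, true_and, not_exists] at hb
    simp only [pOf]
    refine Finset.sum_eq_zero fun ω _ => by simp [hb ω]
  have hsub : ∑ b : β, pOf pu B b * Real.logb 2 (pOf pu B b)
      = ∑ b ∈ Finset.univ.image B, pOf pu B b * Real.logb 2 (pOf pu B b) := by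
    refine (Finset.sum_subset (Finset.subset_univ _) ?_).symm
    intro b _ hb
    rw [hzero b hb]
    simp
  have himg : ∑ b ∈ Finset.univ.image B, pOf pu B b * Real.logb 2 (pOf pu B b)
      = ∑ ω : Fin 9, pOf pu B (B ω) * Real.logb 2 (pOf pu B (B ω)) :=
    Finset.sum_image (fun x _ y _ h => hB h)
  rw [H2, hsub, himg]
  have : ∑ ω : Fin 9, pOf pu B (B ω) * Real.logb 2 (pOf pu B (B ω))
      = ∑ _ω : Fin 9, (1/9 : ℝ) * Real.logb 2 (1/9) := by
    refine Finset.sum_congr rfl fun ω _ => by rw [hval ω]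
  rw [this, Finset.sum_const]
  simp only [Finset.card_univ, Fintype.card_fin, nsmul_eq_mul]
  have h9 : Real.logb 2 (1/9 : ℝ) = -(2 * Real.logb 2 3) := by
    rw [one_div, Real.logb_inv, show (9:ℝ) = 3 ^ (2:ℕ) by norm_num, Real.logb_pow]
    push_cast
    ring
  rw [h9]
  ring

/-- **Counterexample to Heegard–Berger's Theorem 2 (information-theoretic core).**
There exist random variables `X, U₁₂, U₁₃, U₂₃` on a common finite probability space
(taken of the form `Fin n`) such that `X` is uniform on a three-element alphabet (so
`H(X) = log₂ 3 > 0`), `I(X;U₁₂) + I(X;U₁₃) + I(X;U₂₃) = 0`, and yet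
`H(X | U₁₂,U₁₃) = H(X | U₁₂,U₂₃) = H(X | U₁₃,U₂₃) = 0`. -/
theorem counterexample_heegard_berger :
    ∃ (n : ℕ) (p : Fin n → ℝ) (X U12 U13 U23 : Fin n → ZMod 3),
      IsPMF p ∧
      (∀ a, pOf p X a = 1 / 3) ∧
      H2 p X = Real.logb 2 3 ∧ 0 < H2 p X ∧
      MI p X U12 + MI p X U13 + MI p X U23 = 0 ∧
      condH p X (fun ω => (U12 ω, U13 ω)) = 0 ∧
      condH p X (fun ω => (U12 ω, U23 ω)) = 0 ∧
      condH p X (fun ω => (U13 ω, U23 ω)) = 0 := by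
  obtain ⟨hX, hW, hU13, hU23⟩ := pOf_eq_third
  refine ⟨9, pu, Xf, Wf, U13f, U23f, ?_, hX, ?_, ?_, ?_, ?_, ?_, ?_⟩
  · constructor
    · intro ω; norm_num [pu]
    · norm_num [pu, Fin.sum_univ_succ]
  · exact H2_of_third hX
  · rw [H2_of_third hX]
    have : (1:ℝ) < 3 := by norm_num
    exact Real.logb_pos (by norm_num) this
  · have h1 : H2 pu (fun ω => (Xf ω, Wf ω)) = 2 * Real.logb 2 3 :=
      H2_of_inj (by decide)
    have h2 : H2 pu (fun ω => (Xf ω, U13f ω)) = 2 * Real.logb 2 3 :=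
      H2_of_inj (by decide)
    have h3 : H2 pu (fun ω => (Xf ω, U23f ω)) = 2 * Real.logb 2 3 :=
      H2_of_inj (by decide)
    simp only [MI, H2_of_third hX, H2_of_third hW, H2_of_third hU13, H2_of_third hU23,
      h1, h2, h3]
    ring
  · have h1 : H2 pu (fun ω => (Xf ω, Wf ω, U13f ω)) = 2 * Real.logb 2 3 :=
      H2_of_inj (by decide)
    have h2 : H2 pu (fun ω => (Wf ω, U13f ω)) = 2 * Real.logb 2 3 :=
      H2_of_inj (by decide)
    simp only [condH, h1, h2, sub_self]
  · have h1 : H2 pu (fun ω => (Xf ω, Wf ω, U23f ω)) = 2 * Real.logb 2 3 :=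
      H2_of_inj (by decide)
    have h2 : H2 pu (fun ω => (Wf ω, U23f ω)) = 2 * Real.logb 2 3 :=
      H2_of_inj (by decide)
    simp only [condH, h1, h2, sub_self]
  · have h1 : H2 pu (fun ω => (Xf ω, U13f ω, U23f ω)) = 2 * Real.logb 2 3 :=
      H2_of_inj (by decide)
    have h2 : H2 pu (fun ω => (U13f ω, U23f ω)) = 2 * Real.logb 2 3 :=
      H2_of_inj (by decide)
    simp only [condH, h1, h2, sub_self]


end
end
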